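/- For exchange ratios under mutation: in any seed with skew-symmetrizable exchange matrix, for mutable indices i ≠ k one has the identity X_{i,μ_k(𝐬)} = X_{i,𝐬} · (1 + X_{k,𝐬}^{-sgn(ε_{ik})})^{-ε_{ik}} in the ambient field, where X_{i,𝐬} = ∏_{j∈J} A_{j,𝐬}^{ε_{ij}} and sgn(ε_{ik}) ∈ {-1,0,1}. -/

import Mathlib

open scoped BigOperators

/-- Matrix mutation at `k`: `ε'_{ij} = -ε_{ij}` if `k ∈ {i,j}`, else
`ε'_{ij} = ε_{ij} + [ε_{ik}]₊ ε_{kj} + ε_{ik} [-ε_{kj}]₊`. -/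
def mutateMatrix {J : Type*} [DecidableEq J] (ε : J → J → ℤ) (k : J) : J → J → ℤ :=
  fun i j =>
    if i = k ∨ j = k then -ε i j
    else ε i j + max (ε i k) 0 * ε k j + ε i k * max (-ε k j) 0

/-- **Exchange ratios under mutation.**
Let `{A_j}` be the (algebraically independent) cluster variables of a seed with
skew-symmetrizable exchange matrix `ε`, mutable vertex set `J_uf`, and let `μ_k` be the
mutation at `k ∈ J_uf`, replacing `A_k` by
`(∏_j A_j^{[ε_{kj}]₊} + ∏_j A_j^{[-ε_{kj}]₊}) / A_k` and `ε` by `μ_k(ε)`.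
Then for mutable `i ≠ k`, the exchange ratios `X_{i,𝐬} = ∏_j A_j^{ε_{ij}}` satisfy
`X_{i,μ_k(𝐬)} = X_{i,𝐬} · (1 + X_{k,𝐬}^{-sgn(ε_{ik})})^{-ε_{ik}}`. -/
theorem exchange_ratio_mutation {K : Type*} [Field K] [CharZero K]
    {J : Type*} [Fintype J] [DecidableEq J]
    (A : J → K) (hind : AlgebraicIndependent ℚ A)
    (ε : J → J → ℤ) (d : J → ℤ)
    (hd : ∀ j, 0 < d j)
    (hskew : ∀ i j, ε i j * d j = -(ε j i * d i))
    (Juf : Finset J) (i k : J) (hi : i ∈ Juf) (hk : k ∈ Juf) (hik : i ≠ k)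
    (A' : J → K)
    (hA' : A' = Function.update A k
      (((∏ j, A j ^ max (ε k j) 0) + ∏ j, A j ^ max (-ε k j) 0) / A k)) :
    (∏ j, A' j ^ mutateMatrix ε k i j) =
      (∏ j, A j ^ ε i j) *
        (1 + (∏ j, A j ^ ε k j) ^ (-(ε i k).sign)) ^ (-ε i k) := by
  classical
  have hinj : Function.Injective (MvPolynomial.aeval A : MvPolynomial J ℚ →ₐ[ℚ] K) := hind
  have hA0 : ∀ j, A j ≠ 0 := by
    intro j hj
    have hx : (MvPolynomial.aeval A : MvPolynomial J ℚ →ₐ[ℚ] K) (MvPolynomial.X j) =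
        (MvPolynomial.aeval A : MvPolynomial J ℚ →ₐ[ℚ] K) 0 := by simp [hj]
    exact MvPolynomial.X_ne_zero j (hinj hx)
  set P := ∏ j, A j ^ max (ε k j) 0 with hPdef
  set M := ∏ j, A j ^ max (-ε k j) 0 with hMdef
  set Xi := ∏ j, A j ^ ε i j with hXidef
  set Xk := ∏ j, A j ^ ε k j with hXkdef
  set c := ε i k with hc
  -- nonvanishing of P, M, P+M, A k
  have hP0 : P ≠ 0 := Finset.prod_ne_zero_iff.mpr fun j _ => zpow_ne_zero _ (hA0 j)
  have hM0 : M ≠ 0 := Finset.prod_ne_zero_iff.mpr fun j _ => zpow_ne_zero _ (hA0 j)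
  have hPM : P + M ≠ 0 := by
    have hPf : P = (MvPolynomial.aeval A : MvPolynomial J ℚ →ₐ[ℚ] K)
        (∏ j, MvPolynomial.X j ^ (max (ε k j) 0).toNat) := by
      rw [map_prod]
      refine Finset.prod_congr rfl fun j _ => ?_
      rw [map_pow, MvPolynomial.aeval_X, ← zpow_natCast,
        Int.toNat_of_nonneg (le_max_right _ _)]
    have hMf : M = (MvPolynomial.aeval A : MvPolynomial J ℚ →ₐ[ℚ] K)
        (∏ j, MvPolynomial.X j ^ (max (-ε k j) 0).toNat) := by
      rw [map_prod]
      refine Finset.prod_congr rfl fun j _ => ?_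
      rw [map_pow, MvPolynomial.aeval_X, ← zpow_natCast,
        Int.toNat_of_nonneg (le_max_right _ _)]
    rw [hPf, hMf, ← map_add]
    intro h
    have h0 : ((∏ j, MvPolynomial.X j ^ (max (ε k j) 0).toNat) +
        ∏ j, MvPolynomial.X j ^ (max (-ε k j) 0).toNat : MvPolynomial J ℚ) = 0 := by
      apply hinj
      rw [h, map_zero]
    have := congrArg (MvPolynomial.eval (fun _ => (1 : ℚ))) h0
    simp at this
  have hkk : ε k k = 0 := by
    have h := hskew k k
    have hdk := (hd k).ne'
    have h0 : ε k k * d k = 0 := by linarith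
    rcases mul_eq_zero.mp h0 with h' | h'
    · exact h'
    · exact absurd h' hdk
  -- Xk * M = P
  have hXkM : Xk * M = P := by
    rw [hXkdef, hMdef, hPdef, ← Finset.prod_mul_distrib]
    refine Finset.prod_congr rfl fun j _ => ?_
    rw [← zpow_add₀ (hA0 j)]
    congr 1
    omega
  subst hA'
  -- split off the k-th factor
  rw [← Finset.mul_prod_erase Finset.univ _ (Finset.mem_univ k)]
  have h2 : mutateMatrix ε k i k = -c := by simp [mutateMatrix, hc]
  have h3 : ∏ j ∈ Finset.univ.erase k,
      (Function.update A k ((P + M) / A k) j) ^ mutateMatrix ε k i j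
      = ∏ j ∈ Finset.univ.erase k,
        (A j ^ ε i j * (A j ^ ε k j) ^ max c 0 * (A j ^ max (-ε k j) 0) ^ c) := by
    refine Finset.prod_congr rfl fun j hj => ?_
    have hjk : j ≠ k := Finset.ne_of_mem_erase hj
    rw [Function.update_of_ne hjk, mutateMatrix]
    rw [if_neg (by push_neg; exact ⟨hik, hjk⟩)]
    rw [show ε i j + max (ε i k) 0 * ε k j + ε i k * max (-ε k j) 0
          = ε i j + ε k j * max c 0 + max (-ε k j) 0 * c by rw [hc]; ring]
    rw [zpow_add₀ (hA0 j), zpow_add₀ (hA0 j), zpow_mul, zpow_mul]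
  have e1 : ∏ j ∈ Finset.univ.erase k, A j ^ ε i j = Xi / A k ^ c := by
    rw [eq_div_iff (zpow_ne_zero _ (hA0 k)), hXidef, mul_comm,
      ← Finset.mul_prod_erase Finset.univ _ (Finset.mem_univ k)]
  have e2 : ∏ j ∈ Finset.univ.erase k, A j ^ ε k j = Xk := by
    rw [hXkdef, ← Finset.mul_prod_erase Finset.univ (fun j => A j ^ ε k j) (Finset.mem_univ k),
      hkk, zpow_zero, one_mul]
  have e3 : ∏ j ∈ Finset.univ.erase k, A j ^ max (-ε k j) 0 = M := by
    rw [hMdef, ← Finset.mul_prod_erase Finset.univ (fun j => A j ^ max (-ε k j) 0)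
      (Finset.mem_univ k), hkk]
    norm_num
  rw [Function.update_self, h2, h3, Finset.prod_mul_distrib, Finset.prod_mul_distrib,
    Finset.prod_zpow, Finset.prod_zpow, e1, e2, e3]
  -- now pure field algebra + case analysis on the sign of c
  have hAk := hA0 k
  have hXk0 : Xk ≠ 0 := by
    intro h; rw [h, zero_mul] at hXkM; exact hP0 hXkM.symm
  rcases lt_trichotomy c 0 with hlt | heq | hgt
  · have hs : c.sign = -1 := Int.sign_eq_neg_one_of_neg hlt
    have hmax : max c 0 = 0 := max_eq_right hlt.le
    rw [hs, hmax]
    have h1Xk : (1 : K) + Xk ^ (-(-1) : ℤ) = (P + M) / M := by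
      rw [eq_div_iff hM0]
      simp only [neg_neg, zpow_one]
      rw [add_mul, one_mul, hXkM, add_comm]
    rw [h1Xk, zpow_zero, div_zpow, div_zpow, zpow_neg (A k), zpow_neg M,
      div_inv_eq_mul, div_inv_eq_mul]
    have h1 : A k ^ c ≠ 0 := zpow_ne_zero _ hAk
    have hb2 : (P + M) ^ c ≠ 0 := zpow_ne_zero _ hPM
    have hb3 : M ^ c ≠ 0 := zpow_ne_zero _ hM0
    field_simp
  · rw [heq]
    norm_num
  · have hs : c.sign = 1 := Int.sign_eq_one_of_pos hgt
    have hmax : max c 0 = c := max_eq_left hgt.le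
    rw [hs, hmax]
    have h1Xk : (1 : K) + Xk ^ (-(1:ℤ)) = (P + M) / P := by
      rw [eq_div_iff hP0, zpow_neg, zpow_one, add_mul, one_mul, ← hXkM,
        inv_mul_cancel_left₀ hXk0, add_comm]
    rw [h1Xk, div_zpow, ← hXkM]
    rw [← hXkM] at hPM
    rw [zpow_neg (A k), div_zpow, zpow_neg (Xk * M), div_inv_eq_mul, div_inv_eq_mul, mul_zpow Xk M]
    have h1 : A k ^ c ≠ 0 := zpow_ne_zero _ hAk
    have hb2 : (Xk * M + M) ^ c ≠ 0 := zpow_ne_zero _ hPM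
    have hb3 : M ^ c ≠ 0 := zpow_ne_zero _ hM0
    have hb4 : Xk ^ c ≠ 0 := zpow_ne_zero _ hXk0
    field_simp
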